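/- arXiv:math/0610771 — 3 statements merged into one kernel-verified Lean document; each statement's English description precedes it below -/
import Mathlib

section
/- Let E be a Banach space, T > 0, and α, β ∈ (0,1] with β ≤ α. If u ∈ C^α_α((0,T],E) (i.e., u is bounded on (0,T] and t ↦ t^α u(t) is α-Hölder continuous on (0,T]) and v ∈ C^β_β((0,T],E') for another Banach space E' with a continuous bilinear multiplication E × E' → F, then the product uv belongs to C^β_β((0,T],F), and ‖uv‖_{β,β} ≤ C ‖u‖_{α,α} ‖v‖_{β,β}. -/
/-!
Put `U t = t ^ α • u t` and `V t = t ^ β • v t`, so that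
`t ^ β • φ (u t) (v t) = t ^ (-α) • φ (U t) (V t)`. For `s < t` bilinearity splits the difference
of these into
`t ^ (-α) • φ (U t - U s) (V t) + t ^ (-α) • φ (U s) (V t - V s)`
`  + (t ^ (-α) - s ^ (-α)) • φ (U s) (V s)`,
and the scalar weights of the three terms are at most `(t - s) ^ β`: the first because `β ≤ α`
and `t - s ≤ t`, the second because `s ≤ t`, the third because
`1 - (s / t) ^ α ≤ ((t - s) / t) ^ β` for `α, β ≤ 1`.
-/

open Real

namespace Real

lemma rpow_neg_mul_rpow {s t : ℝ} (hs : 0 ≤ s) (ht : 0 ≤ t) (α : ℝ) :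
    t ^ (-α) * s ^ α = (s / t) ^ α := by
  rw [rpow_neg ht, div_rpow hs ht, inv_mul_eq_div]

lemma div_rpow_mul_rpow {d t : ℝ} (hd : 0 ≤ d) (ht : 0 < t) (β : ℝ) :
    (d / t) ^ β * t ^ β = d ^ β := by
  rw [div_rpow hd ht.le, div_mul_cancel₀ _ (rpow_pos_of_pos ht β).ne']

lemma rpow_neg_mul_rpow_mul_rpow_le {d t α β : ℝ} (hd : 0 ≤ d) (ht : 0 < t) (hdt : d ≤ t)
    (hβ : 0 ≤ β) (hβα : β ≤ α) :
    t ^ (-α) * d ^ α * t ^ β ≤ d ^ β := by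
  calc t ^ (-α) * d ^ α * t ^ β = (d / t) ^ α * t ^ β := by rw [rpow_neg_mul_rpow hd ht.le]
    _ ≤ (d / t) ^ β * t ^ β := by
      gcongr ?_ * _
      exact rpow_le_rpow_of_exponent_ge' (by positivity) (div_le_one_of_le₀ hdt ht.le) hβ hβα
    _ = d ^ β := div_rpow_mul_rpow hd ht β

lemma rpow_neg_mul_rpow_le_one {s t α : ℝ} (hs : 0 ≤ s) (ht : 0 < t) (hst : s ≤ t) (hα : 0 ≤ α) :
    t ^ (-α) * s ^ α ≤ 1 := by
  rw [rpow_neg_mul_rpow hs ht.le]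
  exact rpow_le_one (by positivity) (div_le_one_of_le₀ hst ht.le) hα

lemma rpow_neg_sub_rpow_neg_mul_rpow_mul_rpow_le {s t α β : ℝ} (hs : 0 < s) (hst : s ≤ t)
    (hα : α ≤ 1) (hβ : 0 ≤ β) (hβ1 : β ≤ 1) :
    (s ^ (-α) - t ^ (-α)) * s ^ α * s ^ β ≤ (t - s) ^ β := by
  have ht : 0 < t := hs.trans_le hst
  have hx : s / t ≤ 1 := div_le_one_of_le₀ hst ht.le
  have hweight : 1 - (s / t) ^ α ≤ ((t - s) / t) ^ β := by
    rw [sub_div, div_self ht.ne']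
    have h1 : s / t ≤ (s / t) ^ α := self_le_rpow_of_le_one (by positivity) hx hα
    have h2 : 1 - s / t ≤ (1 - s / t) ^ β :=
      self_le_rpow_of_le_one (sub_nonneg.2 hx) (by linarith [div_nonneg hs.le ht.le]) hβ1
    linarith
  calc (s ^ (-α) - t ^ (-α)) * s ^ α * s ^ β = (1 - (s / t) ^ α) * s ^ β := by
        rw [sub_mul, rpow_neg_mul_rpow hs.le ht.le, ← rpow_add hs, neg_add_cancel, rpow_zero]
    _ ≤ ((t - s) / t) ^ β * t ^ β := by gcongr
    _ = (t - s) ^ β := div_rpow_mul_rpow (sub_nonneg.2 hst) ht β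

end Real

lemma norm_sub_le_mul_abs_rpow_of_lt {F : Type*} [NormedAddCommGroup F] {f : ℝ → F} {S : Set ℝ}
    {K β : ℝ} (hβ : β ≠ 0) (h : ∀ t ∈ S, ∀ s ∈ S, s < t → ‖f t - f s‖ ≤ K * (t - s) ^ β) :
    ∀ t ∈ S, ∀ s ∈ S, ‖f t - f s‖ ≤ K * |t - s| ^ β := by
  intro t ht s hs
  rcases lt_trichotomy s t with hst | rfl | hts
  · rw [abs_of_pos (sub_pos.2 hst)]
    exact h t ht s hs hst
  · simp [zero_rpow hβ]
  · rw [norm_sub_rev, abs_sub_comm, abs_of_pos (sub_pos.2 hts)]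
    exact h s hs t ht hts

namespace ContinuousLinearMap

variable {𝕜 E E' F : Type*} [NontriviallyNormedField 𝕜] [NormedAddCommGroup E] [NormedSpace 𝕜 E]
  [NormedAddCommGroup E'] [NormedSpace 𝕜 E'] [NormedAddCommGroup F] [NormedSpace 𝕜 F]
  (φ : E →L[𝕜] E' →L[𝕜] F)

lemma smul_apply_apply_sub_smul_apply_apply (a b : 𝕜) (x x' : E) (y y' : E') :
    a • φ x y - b • φ x' y' =
      a • φ (x - x') y + a • φ x' (y - y') + (a - b) • φ x' y' := by
  simp only [map_sub, sub_apply, smul_sub, sub_smul]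
  abel

lemma norm_smul_apply_apply_sub_smul_apply_apply_le (a b : 𝕜) (x x' : E) (y y' : E') :
    ‖a • φ x y - b • φ x' y'‖ ≤
      ‖φ‖ * (‖a‖ * ‖x - x'‖ * ‖y‖ + ‖a‖ * ‖x'‖ * ‖y - y'‖ + ‖a - b‖ * ‖x'‖ * ‖y'‖) := by
  calc ‖a • φ x y - b • φ x' y'‖
      ≤ ‖a‖ * (‖φ‖ * ‖x - x'‖ * ‖y‖) + ‖a‖ * (‖φ‖ * ‖x'‖ * ‖y - y'‖)
        + ‖a - b‖ * (‖φ‖ * ‖x'‖ * ‖y'‖) := by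
        rw [smul_apply_apply_sub_smul_apply_apply]
        refine norm_add₃_le.trans ?_
        simp only [norm_smul]
        gcongr <;> exact φ.le_opNorm₂ _ _
    _ = _ := by ring

end ContinuousLinearMap

section SingularHolder

variable {E E' F : Type*} [NormedAddCommGroup E] [NormedSpace ℝ E]
  [NormedAddCommGroup E'] [NormedSpace ℝ E'] [NormedAddCommGroup F] [NormedSpace ℝ F]
  (φ : E →L[ℝ] E' →L[ℝ] F)

lemma rpow_smul_apply_apply_eq {t : ℝ} (ht : 0 < t) (α β : ℝ) (x : E) (y : E') :
    t ^ β • φ x y = t ^ (-α) • φ (t ^ α • x) (t ^ β • y) := by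
  rw [map_smul, map_smul, smul_apply, smul_smul, smul_smul, rpow_neg ht.le,
    mul_right_comm, inv_mul_cancel₀ (rpow_pos_of_pos ht α).ne', one_mul]

lemma norm_rpow_smul_apply_apply_sub_le {α β : ℝ} (hα : α ≤ 1) (hβ : 0 ≤ β) (hβα : β ≤ α)
    {s t : ℝ} (hs : 0 < s) (hst : s ≤ t) {x x' : E} {y y' : E'} {Bu Ku Bv Kv : ℝ}
    (hx' : ‖x'‖ ≤ Bu) (hy : ‖y‖ ≤ Bv) (hy' : ‖y'‖ ≤ Bv) (hKu : 0 ≤ Ku) (hKv : 0 ≤ Kv)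
    (hxx' : ‖t ^ α • x - s ^ α • x'‖ ≤ Ku * (t - s) ^ α)
    (hyy' : ‖t ^ β • y - s ^ β • y'‖ ≤ Kv * (t - s) ^ β) :
    ‖t ^ β • φ x y - s ^ β • φ x' y'‖ ≤ ‖φ‖ * (Ku * Bv + Bu * Kv + Bu * Bv) * (t - s) ^ β := by
  have ht : 0 < t := hs.trans_le hst
  have hBu : 0 ≤ Bu := (norm_nonneg _).trans hx'
  have hBv : 0 ≤ Bv := (norm_nonneg _).trans hy
  have hx's : ‖s ^ α • x'‖ ≤ s ^ α * Bu := by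
    rw [norm_smul_of_nonneg (by positivity)]; gcongr
  have hyt : ‖t ^ β • y‖ ≤ t ^ β * Bv := by
    rw [norm_smul_of_nonneg (by positivity)]; gcongr
  have hy's : ‖s ^ β • y'‖ ≤ s ^ β * Bv := by
    rw [norm_smul_of_nonneg (by positivity)]; gcongr
  have hweight : ‖t ^ (-α)‖ = t ^ (-α) := norm_of_nonneg (by positivity)
  have hmono : t ^ (-α) ≤ s ^ (-α) := rpow_le_rpow_of_nonpos hs hst (by linarith)
  have hdiff : ‖t ^ (-α) - s ^ (-α)‖ = s ^ (-α) - t ^ (-α) := by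
    rw [norm_sub_rev, norm_of_nonneg (sub_nonneg.2 hmono)]
  rw [rpow_smul_apply_apply_eq φ ht α, rpow_smul_apply_apply_eq φ hs α]
  refine (φ.norm_smul_apply_apply_sub_smul_apply_apply_le _ _ _ _ _ _).trans ?_
  rw [mul_assoc ‖φ‖, add_mul, add_mul, hweight, hdiff]
  gcongr ‖φ‖ * (?_ + ?_ + ?_)
  · calc t ^ (-α) * ‖t ^ α • x - s ^ α • x'‖ * ‖t ^ β • y‖
        ≤ t ^ (-α) * (Ku * (t - s) ^ α) * (t ^ β * Bv) := by gcongr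
      _ = Ku * Bv * (t ^ (-α) * (t - s) ^ α * t ^ β) := by ring
      _ ≤ Ku * Bv * (t - s) ^ β := by
        gcongr
        exact rpow_neg_mul_rpow_mul_rpow_le (sub_nonneg.2 hst) ht (by linarith) hβ hβα
  · calc t ^ (-α) * ‖s ^ α • x'‖ * ‖t ^ β • y - s ^ β • y'‖
        ≤ t ^ (-α) * (s ^ α * Bu) * (Kv * (t - s) ^ β) := by gcongr
      _ = Bu * Kv * (t - s) ^ β * (t ^ (-α) * s ^ α) := by ring
      _ ≤ Bu * Kv * (t - s) ^ β := by
        refine mul_le_of_le_one_right (by positivity) ?_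
        exact rpow_neg_mul_rpow_le_one hs.le ht hst (hβ.trans hβα)
  · calc (s ^ (-α) - t ^ (-α)) * ‖s ^ α • x'‖ * ‖s ^ β • y'‖
        ≤ (s ^ (-α) - t ^ (-α)) * (s ^ α * Bu) * (s ^ β * Bv) := by gcongr
      _ = Bu * Bv * ((s ^ (-α) - t ^ (-α)) * s ^ α * s ^ β) := by ring
      _ ≤ Bu * Bv * (t - s) ^ β := by
        gcongr
        exact rpow_neg_sub_rpow_neg_mul_rpow_mul_rpow_le hs hst hα hβ (hβα.trans hα)

end SingularHolder

/-- Multiplication property `C^α_α × C^β_β → C^β_β` of singular Hölder spaces. -/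
theorem singular_holder_mult (E E' F : Type*) [NormedAddCommGroup E] [NormedSpace ℝ E]
    [NormedAddCommGroup E'] [NormedSpace ℝ E'] [NormedAddCommGroup F] [NormedSpace ℝ F]
    (φ : E →L[ℝ] E' →L[ℝ] F) (T α β : ℝ) (hT : 0 < T)
    (hα : α ∈ Set.Ioc (0:ℝ) 1) (hβ : β ∈ Set.Ioc (0:ℝ) 1) (hβα : β ≤ α) :
    ∃ C > 0, ∀ (u : ℝ → E) (v : ℝ → E') (Bu Ku Bv Kv : ℝ),
      (∀ t ∈ Set.Ioc 0 T, ‖u t‖ ≤ Bu) →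
      (∀ t ∈ Set.Ioc 0 T, ∀ s ∈ Set.Ioc 0 T,
        ‖t ^ α • u t - s ^ α • u s‖ ≤ Ku * |t - s| ^ α) →
      (∀ t ∈ Set.Ioc 0 T, ‖v t‖ ≤ Bv) →
      (∀ t ∈ Set.Ioc 0 T, ∀ s ∈ Set.Ioc 0 T,
        ‖t ^ β • v t - s ^ β • v s‖ ≤ Kv * |t - s| ^ β) →
      (∀ t ∈ Set.Ioc 0 T, ‖φ (u t) (v t)‖ ≤ C * (Bu + Ku) * (Bv + Kv)) ∧
      (∀ t ∈ Set.Ioc 0 T, ∀ s ∈ Set.Ioc 0 T,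
        ‖t ^ β • φ (u t) (v t) - s ^ β • φ (u s) (v s)‖ ≤
          C * (Bu + Ku) * (Bv + Kv) * |t - s| ^ β) := by
  refine ⟨‖φ‖ + 1, by positivity, fun u v Bu Ku Bv Kv hBu hKu hBv hKv => ?_⟩
  have hT' : T ∈ Set.Ioc 0 T := ⟨hT, le_rfl⟩
  have hT2 : T / 2 ∈ Set.Ioc 0 T := ⟨by positivity, by linarith⟩
  have hgap : 0 < |T - T / 2| := abs_pos_of_pos (by linarith)
  have hBu0 : 0 ≤ Bu := (norm_nonneg _).trans (hBu T hT')
  have hBv0 : 0 ≤ Bv := (norm_nonneg _).trans (hBv T hT')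
  have hKu0 : 0 ≤ Ku := nonneg_of_mul_nonneg_left
    ((norm_nonneg _).trans (hKu T hT' (T / 2) hT2)) (rpow_pos_of_pos hgap α)
  have hKv0 : 0 ≤ Kv := nonneg_of_mul_nonneg_left
    ((norm_nonneg _).trans (hKv T hT' (T / 2) hT2)) (rpow_pos_of_pos hgap β)
  have hC : ‖φ‖ * (Ku * Bv + Bu * Kv + Bu * Bv) ≤ (‖φ‖ + 1) * (Bu + Ku) * (Bv + Kv) := by
    rw [mul_assoc (‖φ‖ + 1)]
    gcongr
    · linarith
    · nlinarith [mul_nonneg hKu0 hKv0]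
  constructor
  · intro t ht
    calc ‖φ (u t) (v t)‖ ≤ ‖φ‖ * ‖u t‖ * ‖v t‖ := φ.le_opNorm₂ _ _
      _ ≤ ‖φ‖ * Bu * Bv := by gcongr; exacts [hBu t ht, hBv t ht]
      _ ≤ (‖φ‖ + 1) * (Bu + Ku) * (Bv + Kv) := by gcongr <;> linarith
  · refine norm_sub_le_mul_abs_rpow_of_lt hβ.1.ne' fun t ht s hs hst => ?_
    have hdist : |t - s| = t - s := abs_of_pos (sub_pos.2 hst)
    refine (norm_rpow_smul_apply_apply_sub_le φ hα.2 hβ.1.le hβα hs.1 hst.le (hBu s hs)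
      (hBv t ht) (hBv s hs) hKu0 hKv0 ?_ ?_).trans ?_
    · simpa only [hdist] using hKu t ht s hs
    · simpa only [hdist] using hKv t ht s hs
    · gcongr
end

section
/- Let E be a Banach space, T > 0, and α, β ∈ (0,1] with β ≤ α. If u ∈ C^α_0([0,T],E) (α-Hölder continuous with u(0)=0) and v ∈ C^β_0([0,T],E'), with a continuous bilinear multiplication E × E' → F, then the pointwise product uv satisfies: t ↦ t^{-α} u(t)v(t) extends to a β-Hölder continuous function on [0,T] vanishing at 0; i.e., uv ∈ C^β_{-α}. -/
set_option maxHeartbeats 1000000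


/-- Multiplication property `C^α_0 × C^β_0 → C^β_{-α}`. -/
theorem singular_holder_mult_vanishing (E E' F : Type*) [NormedAddCommGroup E] [NormedSpace ℝ E]
    [NormedAddCommGroup E'] [NormedSpace ℝ E'] [NormedAddCommGroup F] [NormedSpace ℝ F]
    (φ : E →L[ℝ] E' →L[ℝ] F) (T α β : ℝ) (hT : 0 < T)
    (hα : α ∈ Set.Ioc (0:ℝ) 1) (hβ : β ∈ Set.Ioc (0:ℝ) 1) (hβα : β ≤ α)
    (u : ℝ → E) (v : ℝ → E') (Ku Kv : ℝ)
    (hu0 : u 0 = 0) (hv0 : v 0 = 0)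
    (hu : ∀ t ∈ Set.Icc 0 T, ∀ s ∈ Set.Icc 0 T, ‖u t - u s‖ ≤ Ku * |t - s| ^ α)
    (hv : ∀ t ∈ Set.Icc 0 T, ∀ s ∈ Set.Icc 0 T, ‖v t - v s‖ ≤ Kv * |t - s| ^ β) :
    ∃ w : ℝ → F, w 0 = 0 ∧
      (∀ t ∈ Set.Ioc 0 T, w t = t ^ (-α) • φ (u t) (v t)) ∧
      ∃ K : ℝ, ∀ t ∈ Set.Icc 0 T, ∀ s ∈ Set.Icc 0 T,
        ‖w t - w s‖ ≤ K * |t - s| ^ β := by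
  obtain ⟨hα0, hα1⟩ := hα
  obtain ⟨hβ0, hβ1⟩ := hβ
  set w : ℝ → F := fun t => if t ≤ 0 then 0 else t ^ (-α) • φ (u t) (v t) with hw
  -- constants are nonnegative
  have hKu : 0 ≤ Ku := by
    have h := hu T ⟨hT.le, le_refl T⟩ 0 ⟨le_refl 0, hT.le⟩
    have hp : (0:ℝ) < |T - 0| ^ α := Real.rpow_pos_of_pos (by simpa [abs_of_nonneg hT.le] using hT) α
    nlinarith [norm_nonneg (u T - u 0)]
  have hKv : 0 ≤ Kv := by
    have h := hv T ⟨hT.le, le_refl T⟩ 0 ⟨le_refl 0, hT.le⟩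
    have hp : (0:ℝ) < |T - 0| ^ β := Real.rpow_pos_of_pos (by simpa [abs_of_nonneg hT.le] using hT) β
    nlinarith [norm_nonneg (v T - v 0)]
  set C : ℝ := ‖φ‖ * Ku * Kv with hC
  have hC0 : 0 ≤ C := by positivity
  -- pointwise bounds
  have hnu : ∀ t ∈ Set.Icc (0:ℝ) T, ‖u t‖ ≤ Ku * t ^ α := by
    intro t ht
    have h := hu t ht 0 ⟨le_refl 0, hT.le⟩
    simpa [hu0, abs_of_nonneg ht.1] using h
  have hnv : ∀ t ∈ Set.Icc (0:ℝ) T, ‖v t‖ ≤ Kv * t ^ β := by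
    intro t ht
    have h := hv t ht 0 ⟨le_refl 0, hT.le⟩
    simpa [hv0, abs_of_nonneg ht.1] using h
  -- bound on ‖φ x y‖
  have hφ : ∀ (x : E) (y : E'), ‖φ x y‖ ≤ ‖φ‖ * ‖x‖ * ‖y‖ := fun x y => φ.le_opNorm₂ x y
  have hφ0 : (0:ℝ) ≤ ‖φ‖ := φ.opNorm_nonneg
  -- key one-sided estimate
  have key : ∀ s t : ℝ, 0 ≤ s → s ≤ t → t ≤ T → ‖w t - w s‖ ≤ 3 * C * (t - s) ^ β := by
    intro s t hs0 hst htT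
    rcases eq_or_lt_of_le hst with rfl | hlt
    · simp only [sub_self, norm_zero]
      positivity
    have ht0 : 0 < t := lt_of_le_of_lt hs0 hlt
    have htmem : t ∈ Set.Icc (0:ℝ) T := ⟨ht0.le, htT⟩
    have hsmem : s ∈ Set.Icc (0:ℝ) T := ⟨hs0, le_trans hst htT⟩
    have ha0 : 0 < t - s := sub_pos.2 hlt
    have hwt : w t = t ^ (-α) • φ (u t) (v t) := by
      simp [hw, not_le.2 ht0]
    have htα : (0:ℝ) < t ^ (-α) := Real.rpow_pos_of_pos ht0 _
    have htinv : t ^ (-α) * t ^ α = 1 := by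
      rw [← Real.rpow_add ht0]; simp
    rcases eq_or_lt_of_le hs0 with rfl | hs0'
    · -- s = 0 : bound ‖w t‖
      have hws : w 0 = 0 := by simp [hw]
      rw [hws, sub_zero, hwt, norm_smul]
      have h1 : ‖φ (u t) (v t)‖ ≤ ‖φ‖ * (Ku * t ^ α) * (Kv * t ^ β) := by
        calc ‖φ (u t) (v t)‖ ≤ ‖φ‖ * ‖u t‖ * ‖v t‖ := hφ _ _
          _ ≤ ‖φ‖ * (Ku * t ^ α) * (Kv * t ^ β) := by
              exact mul_le_mul (mul_le_mul_of_nonneg_left (hnu t htmem) hφ0)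
                (hnv t htmem) (norm_nonneg _) (mul_nonneg hφ0 (by positivity))
      have habs : ‖t ^ (-α)‖ = t ^ (-α) := by
        rw [Real.norm_eq_abs, abs_of_pos htα]
      rw [habs]
      calc t ^ (-α) * ‖φ (u t) (v t)‖ ≤ t ^ (-α) * (‖φ‖ * (Ku * t ^ α) * (Kv * t ^ β)) :=
            mul_le_mul_of_nonneg_left h1 htα.le
        _ = (t ^ (-α) * t ^ α) * (C * t ^ β) := by ring
        _ = C * t ^ β := by rw [htinv]; ring
        _ ≤ 3 * C * (t - 0) ^ β := by rw [sub_zero]; nlinarith [Real.rpow_nonneg ht0.le β]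
    -- now 0 < s < t
    have hws : w s = s ^ (-α) • φ (u s) (v s) := by simp [hw, not_le.2 hs0']
    have hsα : (0:ℝ) < s ^ (-α) := Real.rpow_pos_of_pos hs0' _
    have hdecomp : w t - w s =
        t ^ (-α) • φ (u t) (v t - v s) + t ^ (-α) • φ (u t - u s) (v s)
          + (t ^ (-α) - s ^ (-α)) • φ (u s) (v s) := by
      rw [hwt, hws]
      simp only [map_sub, ContinuousLinearMap.sub_apply, smul_sub, sub_smul]
      abel
    have hvts : ‖v t - v s‖ ≤ Kv * (t - s) ^ β := by
      have := hv t htmem s hsmem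
      rwa [abs_of_pos ha0] at this
    have huts : ‖u t - u s‖ ≤ Ku * (t - s) ^ α := by
      have := hu t htmem s hsmem
      rwa [abs_of_pos ha0] at this
    -- term A
    have hA : ‖t ^ (-α) • φ (u t) (v t - v s)‖ ≤ C * (t - s) ^ β := by
      rw [norm_smul, Real.norm_eq_abs, abs_of_pos htα]
      calc t ^ (-α) * ‖φ (u t) (v t - v s)‖
          ≤ t ^ (-α) * (‖φ‖ * (Ku * t ^ α) * (Kv * (t - s) ^ β)) := by
            apply mul_le_mul_of_nonneg_left _ htα.le
            calc ‖φ (u t) (v t - v s)‖ ≤ ‖φ‖ * ‖u t‖ * ‖v t - v s‖ := hφ _ _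
              _ ≤ ‖φ‖ * (Ku * t ^ α) * (Kv * (t - s) ^ β) :=
                  mul_le_mul (mul_le_mul_of_nonneg_left (hnu t htmem) hφ0)
                    hvts (norm_nonneg _) (mul_nonneg hφ0 (by positivity))
        _ = (t ^ (-α) * t ^ α) * (C * (t - s) ^ β) := by ring
        _ = C * (t - s) ^ β := by rw [htinv]; ring
    -- term B
    have hB : ‖t ^ (-α) • φ (u t - u s) (v s)‖ ≤ C * (t - s) ^ β := by
      rw [norm_smul, Real.norm_eq_abs, abs_of_pos htα]
      have hBkey : (t - s) ^ α * s ^ β ≤ t ^ α * (t - s) ^ β := by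
        have e1 : (t - s) ^ α = (t - s) ^ β * (t - s) ^ (α - β) := by
          rw [← Real.rpow_add ha0]; ring_nf
        have e2 : t ^ α = t ^ β * t ^ (α - β) := by
          rw [← Real.rpow_add ht0]; ring_nf
        have h1 : (t - s) ^ (α - β) ≤ t ^ (α - β) :=
          Real.rpow_le_rpow ha0.le (by linarith) (by linarith)
        have h2 : s ^ β ≤ t ^ β := Real.rpow_le_rpow hs0'.le hst hβ0.le
        rw [e1, e2]
        calc (t - s) ^ β * (t - s) ^ (α - β) * s ^ β
            ≤ (t - s) ^ β * (t ^ (α - β) * t ^ β) := by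
              rw [mul_assoc]
              exact mul_le_mul_of_nonneg_left
                (mul_le_mul h1 h2 (Real.rpow_nonneg hs0 _) (Real.rpow_nonneg ht0.le _))
                (Real.rpow_nonneg ha0.le _)
          _ = t ^ β * t ^ (α - β) * (t - s) ^ β := by ring
      calc t ^ (-α) * ‖φ (u t - u s) (v s)‖
          ≤ t ^ (-α) * (‖φ‖ * (Ku * (t - s) ^ α) * (Kv * s ^ β)) := by
            apply mul_le_mul_of_nonneg_left _ htα.le
            calc ‖φ (u t - u s) (v s)‖ ≤ ‖φ‖ * ‖u t - u s‖ * ‖v s‖ := hφ _ _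
              _ ≤ ‖φ‖ * (Ku * (t - s) ^ α) * (Kv * s ^ β) :=
                  mul_le_mul (mul_le_mul_of_nonneg_left huts hφ0)
                    (hnv s hsmem) (norm_nonneg _) (mul_nonneg hφ0 (by positivity))
        _ = t ^ (-α) * (C * ((t - s) ^ α * s ^ β)) := by ring
        _ ≤ t ^ (-α) * (C * (t ^ α * (t - s) ^ β)) := by
            apply mul_le_mul_of_nonneg_left (mul_le_mul_of_nonneg_left hBkey hC0) htα.le
        _ = (t ^ (-α) * t ^ α) * (C * (t - s) ^ β) := by ring
        _ = C * (t - s) ^ β := by rw [htinv]; ring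
    -- term C
    have hC' : ‖(t ^ (-α) - s ^ (-α)) • φ (u s) (v s)‖ ≤ C * (t - s) ^ β := by
      rw [norm_smul, Real.norm_eq_abs]
      have hle : t ^ (-α) ≤ s ^ (-α) := by
        rw [Real.rpow_neg ht0.le, Real.rpow_neg hs0'.le]
        exact inv_anti₀ (Real.rpow_pos_of_pos hs0' α)
          (Real.rpow_le_rpow hs0'.le hst hα0.le)
      rw [abs_of_nonpos (by linarith), neg_sub]
      have hCkey : (s ^ (-α) - t ^ (-α)) * (s ^ α * s ^ β) ≤ (t - s) ^ β := by
        have hsinv : s ^ (-α) * s ^ α = 1 := by rw [← Real.rpow_add hs0']; simp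
        have hx0 : (0:ℝ) < s / t := div_pos hs0' ht0
        have hx1 : s / t ≤ 1 := (div_le_one ht0).2 hst
        have h1 : s / t ≤ (s / t) ^ α := by
          simpa using Real.rpow_le_rpow_of_exponent_ge hx0 hx1 hα1
        have h2 : t ^ (-α) * s ^ α = (s / t) ^ α := by
          rw [Real.div_rpow hs0'.le ht0.le, Real.rpow_neg ht0.le]; ring
        have e : (s ^ (-α) - t ^ (-α)) * (s ^ α * s ^ β) = (1 - (s / t) ^ α) * s ^ β := by
          rw [← h2]
          linear_combination s ^ β * hsinv
        rw [e]
        have h3 : 1 - (s / t) ^ α ≤ (t - s) / t := by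
          have hq : 1 - s / t = (t - s) / t := by field_simp
          linarith
        have har0 : (0:ℝ) < (t - s) / t := div_pos ha0 ht0
        have har1 : (t - s) / t ≤ 1 := (div_le_one ht0).2 (by linarith)
        have h4 : (t - s) / t ≤ ((t - s) / t) ^ β := by
          simpa using Real.rpow_le_rpow_of_exponent_ge har0 har1 hβ1
        have hsβ : (0:ℝ) ≤ s ^ β := Real.rpow_nonneg hs0 _
        calc (1 - (s / t) ^ α) * s ^ β ≤ ((t - s) / t) * s ^ β :=
              mul_le_mul_of_nonneg_right h3 hsβ
          _ ≤ ((t - s) / t) ^ β * s ^ β := mul_le_mul_of_nonneg_right h4 hsβ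
          _ = ((t - s) / t * s) ^ β := (Real.mul_rpow har0.le hs0).symm
          _ ≤ (t - s) ^ β := by
              apply Real.rpow_le_rpow (by positivity) _ hβ0.le
              rw [div_mul_eq_mul_div, div_le_iff₀ ht0]
              nlinarith
      calc (s ^ (-α) - t ^ (-α)) * ‖φ (u s) (v s)‖
          ≤ (s ^ (-α) - t ^ (-α)) * (‖φ‖ * (Ku * s ^ α) * (Kv * s ^ β)) := by
            apply mul_le_mul_of_nonneg_left _ (by linarith)
            calc ‖φ (u s) (v s)‖ ≤ ‖φ‖ * ‖u s‖ * ‖v s‖ := hφ _ _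
              _ ≤ ‖φ‖ * (Ku * s ^ α) * (Kv * s ^ β) :=
                  mul_le_mul (mul_le_mul_of_nonneg_left (hnu s hsmem) hφ0)
                    (hnv s hsmem) (norm_nonneg _) (mul_nonneg hφ0 (by positivity))
        _ = C * ((s ^ (-α) - t ^ (-α)) * (s ^ α * s ^ β)) := by ring
        _ ≤ C * (t - s) ^ β := mul_le_mul_of_nonneg_left hCkey hC0
    rw [hdecomp]
    calc ‖t ^ (-α) • φ (u t) (v t - v s) + t ^ (-α) • φ (u t - u s) (v s)
          + (t ^ (-α) - s ^ (-α)) • φ (u s) (v s)‖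
        ≤ ‖t ^ (-α) • φ (u t) (v t - v s)‖ + ‖t ^ (-α) • φ (u t - u s) (v s)‖
          + ‖(t ^ (-α) - s ^ (-α)) • φ (u s) (v s)‖ := norm_add₃_le
      _ ≤ 3 * C * (t - s) ^ β := by linarith
  refine ⟨w, by simp [hw], fun t ht => by simp [hw, not_le.2 ht.1], 3 * C, ?_⟩
  intro t ht s hs
  rcases le_total s t with h | h
  · rw [abs_of_nonneg (by linarith)]
    exact key s t hs.1 h ht.2
  · rw [norm_sub_rev, abs_sub_comm, abs_of_nonneg (by linarith)]
    exact key t s ht.1 h hs.2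
end

section
/- Let C be the operator -d²/dy² on C([0,1]) with domain {u ∈ C² : u(0)=0, u'(1)=0}. For every μ ≥ 0 the operator μ + C is invertible on C([0,1]) and there exists a constant c (independent of μ) such that ‖(μ + C)^{-1}‖_{L(C([0,1]))} ≤ c/(1+μ). -/
/-!
Variation of parameters: if `φ, ψ` solve `v'' = μ v` with `φ 0 = 0`, `ψ' 1 = 0` and Wronskian
`W = φ' ψ - φ ψ' > 0`, then `u y = (ψ y ∫₀^y φ f + φ y ∫_y^1 ψ f) / W` solves `-u'' + μ u = f`
with the mixed boundary conditions. When `φ, ψ ≥ 0` the kernel is positive, so `|u| ≤ M w` where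
`w` is the solution for `f ≡ 1`. For `μ ≠ 0`, `∫ φ = Δφ' / μ` gives `w = (1 - φ' 0 * ψ / W) / μ`;
with `s = √μ`, `φ y = sinh (s y)` and `ψ y = cosh (s (1 - y))` this is
`(1 - cosh (s (1 - y)) / cosh s) / s²`, which is at most `1 / μ` and, since
`cosh s - 1 ≤ s² cosh s`, at most `1`. For `μ = 0` take `φ y = y`, `ψ = 1`, so `w = y - y² / 2`.
-/

open Real intervalIntegral Set

structure IsGreenPair (μ : ℝ) (φ φ' ψ ψ' : ℝ → ℝ) (W : ℝ) : Prop where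
  hasDerivAt_fst : ∀ y, HasDerivAt φ (φ' y) y
  hasDerivAt_fst_deriv : ∀ y, HasDerivAt φ' (μ * φ y) y
  hasDerivAt_snd : ∀ y, HasDerivAt ψ (ψ' y) y
  hasDerivAt_snd_deriv : ∀ y, HasDerivAt ψ' (μ * ψ y) y
  fst_zero : φ 0 = 0
  snd_deriv_one : ψ' 1 = 0
  wronskian : ∀ y, φ' y * ψ y - φ y * ψ' y = W

noncomputable def greenSolution (φ ψ f : ℝ → ℝ) (W y : ℝ) : ℝ :=
  (ψ y * (∫ t in (0:ℝ)..y, φ t * f t) + φ y * ∫ t in y..1, ψ t * f t) / W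

theorem hasDerivAt_mul_integral_add_mul_integral {φ ψ f a b : ℝ → ℝ} {a' b' y : ℝ}
    (hφf : Continuous fun t => φ t * f t) (hψf : Continuous fun t => ψ t * f t)
    (ha : HasDerivAt a a' y) (hb : HasDerivAt b b' y) :
    HasDerivAt (fun y => a y * (∫ t in (0:ℝ)..y, φ t * f t) + b y * ∫ t in y..1, ψ t * f t)
      (a' * (∫ t in (0:ℝ)..y, φ t * f t) + b' * (∫ t in y..1, ψ t * f t)
        + (a y * φ y - b y * ψ y) * f y) y := by
  have hA := (hφf.integral_hasStrictDerivAt 0 y).hasDerivAt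
  have hB : HasDerivAt (fun y => ∫ t in y..1, ψ t * f t) (-(ψ y * f y)) y :=
    integral_hasDerivAt_left (hψf.intervalIntegrable _ _) (hψf.stronglyMeasurableAtFilter _ _)
      hψf.continuousAt
  exact ((ha.fun_mul hA).fun_add (hb.fun_mul hB)).congr_deriv (by ring)

theorem integral_eq_sub_div_of_hasDerivAt_mul {μ : ℝ} {g g' : ℝ → ℝ} (hμ : μ ≠ 0)
    (hg : Continuous g) (hg' : ∀ y, HasDerivAt g' (μ * g y) y) (a b : ℝ) :
    ∫ t in a..b, g t = (g' b - g' a) / μ := by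
  rw [eq_div_iff hμ, ← integral_mul_const]
  exact integral_eq_sub_of_hasDerivAt (fun y _ => (hg' y).congr_deriv (mul_comm _ _))
    ((hg.mul continuous_const).intervalIntegrable _ _)

theorem abs_integral_mul_le {g f : ℝ → ℝ} {a b M : ℝ} (hab : a ≤ b) (hg : Continuous g)
    (hg₀ : ∀ t ∈ Icc a b, 0 ≤ g t) (hM : ∀ t ∈ Icc a b, |f t| ≤ M) :
    |∫ t in a..b, g t * f t| ≤ (∫ t in a..b, g t) * M := by
  rw [← Real.norm_eq_abs, ← integral_mul_const]
  refine norm_integral_le_of_norm_le hab (Filter.Eventually.of_forall fun t ht => ?_)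
    ((hg.mul continuous_const).intervalIntegrable a b)
  have ht := Ioc_subset_Icc_self ht
  rw [Real.norm_eq_abs, abs_mul, abs_of_nonneg (hg₀ t ht)]
  exact mul_le_mul_of_nonneg_left (hM t ht) (hg₀ t ht)

namespace IsGreenPair

variable {μ W : ℝ} {φ φ' ψ ψ' : ℝ → ℝ}

theorem continuous_fst (h : IsGreenPair μ φ φ' ψ ψ' W) : Continuous φ :=
  continuous_iff_continuousAt.2 fun y => (h.hasDerivAt_fst y).continuousAt

theorem continuous_snd (h : IsGreenPair μ φ φ' ψ ψ' W) : Continuous ψ :=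
  continuous_iff_continuousAt.2 fun y => (h.hasDerivAt_snd y).continuousAt

theorem greenSolution_solves (h : IsGreenPair μ φ φ' ψ ψ' W) (hW : W ≠ 0) {f : ℝ → ℝ}
    (hf : Continuous f) :
    ∃ u' : ℝ → ℝ, (∀ y, HasDerivAt (greenSolution φ ψ f W) (u' y) y) ∧
      (∀ y, HasDerivAt u' (μ * greenSolution φ ψ f W y - f y) y) ∧
      greenSolution φ ψ f W 0 = 0 ∧ u' 1 = 0 := by
  have hφf := h.continuous_fst.mul hf
  have hψf := h.continuous_snd.mul hf
  refine ⟨fun y => (ψ' y * (∫ t in (0:ℝ)..y, φ t * f t) + φ' y * ∫ t in y..1, ψ t * f t) / W,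
    fun y => ?_, fun y => ?_, by simp [greenSolution, h.fst_zero], by simp [h.snd_deriv_one]⟩
  · exact ((hasDerivAt_mul_integral_add_mul_integral hφf hψf (h.hasDerivAt_snd y)
      (h.hasDerivAt_fst y)).div_const W).congr_deriv (by ring)
  · refine ((hasDerivAt_mul_integral_add_mul_integral hφf hψf (h.hasDerivAt_snd_deriv y)
      (h.hasDerivAt_fst_deriv y)).div_const W).congr_deriv ?_
    unfold greenSolution
    field_simp
    linear_combination (-f y) * h.wronskian y

theorem greenSolution_one (h : IsGreenPair μ φ φ' ψ ψ' W) (hμ : μ ≠ 0) (hW : W ≠ 0) (y : ℝ) :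
    greenSolution φ ψ (fun _ => 1) W y = (1 - φ' 0 * ψ y / W) / μ := by
  simp only [greenSolution, mul_one,
    integral_eq_sub_div_of_hasDerivAt_mul hμ h.continuous_fst h.hasDerivAt_fst_deriv,
    integral_eq_sub_div_of_hasDerivAt_mul hμ h.continuous_snd h.hasDerivAt_snd_deriv,
    h.snd_deriv_one]
  field_simp
  linear_combination h.wronskian y

theorem abs_greenSolution_le (h : IsGreenPair μ φ φ' ψ ψ' W) (hW : 0 < W)
    (hφ : ∀ t ∈ Icc (0:ℝ) 1, 0 ≤ φ t) (hψ : ∀ t ∈ Icc (0:ℝ) 1, 0 ≤ ψ t) {f : ℝ → ℝ} {M : ℝ}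
    (hM : ∀ t ∈ Icc (0:ℝ) 1, |f t| ≤ M) {y : ℝ} (hy : y ∈ Icc (0:ℝ) 1) :
    |greenSolution φ ψ f W y| ≤ greenSolution φ ψ (fun _ => 1) W y * M := by
  have hA := abs_integral_mul_le hy.1 h.continuous_fst
    (fun t ht => hφ t ⟨ht.1, ht.2.trans hy.2⟩) (fun t ht => hM t ⟨ht.1, ht.2.trans hy.2⟩)
  have hB := abs_integral_mul_le hy.2 h.continuous_snd
    (fun t ht => hψ t ⟨hy.1.trans ht.1, ht.2⟩) (fun t ht => hM t ⟨hy.1.trans ht.1, ht.2⟩)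
  simp only [greenSolution, mul_one, abs_div, abs_of_pos hW, div_mul_eq_mul_div]
  gcongr
  calc _ ≤ |ψ y * ∫ t in (0:ℝ)..y, φ t * f t| + |φ y * ∫ t in y..1, ψ t * f t| := abs_add_le _ _
    _ ≤ ψ y * ((∫ t in (0:ℝ)..y, φ t) * M) + φ y * ((∫ t in y..1, ψ t) * M) := by
      rw [abs_mul, abs_mul, abs_of_nonneg (hψ y hy), abs_of_nonneg (hφ y hy)]
      gcongr
      exacts [hψ y hy, hφ y hy]
    _ = _ := by ring

theorem exists_solution_abs_le (h : IsGreenPair μ φ φ' ψ ψ' W) (hW : 0 < W)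
    (hφ : ∀ t ∈ Icc (0:ℝ) 1, 0 ≤ φ t) (hψ : ∀ t ∈ Icc (0:ℝ) 1, 0 ≤ ψ t) {C : ℝ}
    (hC : ∀ y ∈ Icc (0:ℝ) 1, greenSolution φ ψ (fun _ => 1) W y ≤ C) {f : ℝ → ℝ}
    (hf : Continuous f) :
    ∃ u u' : ℝ → ℝ,
      (∀ y ∈ Icc (0:ℝ) 1, HasDerivAt u (u' y) y) ∧
      (∀ y ∈ Icc (0:ℝ) 1, HasDerivAt u' (μ * u y - f y) y) ∧
      u 0 = 0 ∧ u' 1 = 0 ∧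
      ∀ M : ℝ, (∀ τ ∈ Icc (0:ℝ) 1, |f τ| ≤ M) → ∀ y ∈ Icc (0:ℝ) 1, |u y| ≤ C * M := by
  obtain ⟨u', hu, hu', hu0, hu'1⟩ := h.greenSolution_solves hW.ne' hf
  refine ⟨_, u', fun y _ => hu y, fun y _ => hu' y, hu0, hu'1, fun M hM y hy => ?_⟩
  have hM₀ : 0 ≤ M := (abs_nonneg _).trans (hM 0 ⟨le_rfl, zero_le_one⟩)
  exact (h.abs_greenSolution_le hW hφ hψ hM hy).trans (mul_le_mul_of_nonneg_right (hC y hy) hM₀)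

end IsGreenPair

theorem isGreenPair_id_one : IsGreenPair 0 id (fun _ => 1) (fun _ => 1) (fun _ => 0) 1 where
  hasDerivAt_fst y := hasDerivAt_id y
  hasDerivAt_fst_deriv y := (hasDerivAt_const y 1).congr_deriv (zero_mul _).symm
  hasDerivAt_snd y := hasDerivAt_const y 1
  hasDerivAt_snd_deriv y := (hasDerivAt_const y 0).congr_deriv (zero_mul _).symm
  fst_zero := rfl
  snd_deriv_one := rfl
  wronskian y := by simp

theorem greenSolution_id_one (y : ℝ) :
    greenSolution id (fun _ => 1) (fun _ => 1) 1 y = y - y ^ 2 / 2 := by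
  simp only [greenSolution, id_eq, mul_one, one_mul, integral_id, integral_const, smul_eq_mul,
    div_one]
  ring

theorem isGreenPair_sinh_cosh (s : ℝ) :
    IsGreenPair (s ^ 2) (fun y => sinh (s * y)) (fun y => s * cosh (s * y))
      (fun y => cosh (s * (1 - y))) (fun y => -s * sinh (s * (1 - y))) (s * cosh s) where
  hasDerivAt_fst y := ((hasDerivAt_id' y).const_mul s).sinh.congr_deriv (by ring)
  hasDerivAt_fst_deriv y :=
    (((hasDerivAt_id' y).const_mul s).cosh.const_mul s).congr_deriv (by ring)
  hasDerivAt_snd y := (((hasDerivAt_id' y).const_sub 1).const_mul s).cosh.congr_deriv (by ring)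
  hasDerivAt_snd_deriv y :=
    ((((hasDerivAt_id' y).const_sub 1).const_mul s).sinh.const_mul (-s)).congr_deriv (by ring)
  fst_zero := by simp
  snd_deriv_one := by simp
  wronskian y := by
    have h := cosh_add (s * y) (s * (1 - y))
    rw [show s * y + s * (1 - y) = s by ring] at h
    rw [h]
    ring

theorem sinh_le_mul_cosh {x : ℝ} (hx : 0 ≤ x) : sinh x ≤ x * cosh x := by
  have hderiv : ∀ t ∈ interior (Icc 0 x), deriv sinh t ≤ cosh x := by
    intro t ht
    rw [interior_Icc] at ht
    rw [Real.deriv_sinh, cosh_le_cosh, abs_of_pos ht.1, abs_of_nonneg hx]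
    exact ht.2.le
  simpa [mul_comm] using (convex_Icc 0 x).image_sub_le_mul_sub_of_deriv_le
    continuous_sinh.continuousOn differentiable_sinh.differentiableOn hderiv 0 ⟨le_rfl, hx⟩ x
    ⟨hx, le_rfl⟩ hx

theorem cosh_sub_one_le_mul_sinh {x : ℝ} (hx : 0 ≤ x) : cosh x - 1 ≤ x * sinh x := by
  have hderiv : ∀ t ∈ interior (Icc 0 x), deriv cosh t ≤ sinh x := by
    intro t ht
    rw [interior_Icc] at ht
    rw [Real.deriv_cosh, sinh_le_sinh]
    exact ht.2.le
  simpa [mul_comm] using (convex_Icc 0 x).image_sub_le_mul_sub_of_deriv_le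
    continuous_cosh.continuousOn differentiable_cosh.differentiableOn hderiv 0 ⟨le_rfl, hx⟩ x
    ⟨hx, le_rfl⟩ hx

theorem cosh_sub_one_le_sq_mul_cosh (x : ℝ) : cosh x - 1 ≤ x ^ 2 * cosh x := by
  rw [← cosh_abs, ← sq_abs]
  have hx := abs_nonneg x
  calc cosh |x| - 1 ≤ |x| * sinh |x| := cosh_sub_one_le_mul_sinh hx
    _ ≤ |x| * (|x| * cosh |x|) := mul_le_mul_of_nonneg_left (sinh_le_mul_cosh hx) hx
    _ = |x| ^ 2 * cosh |x| := by ring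

theorem one_sub_cosh_div_cosh_div_sq_le {s : ℝ} (hs : s ≠ 0) (t : ℝ) :
    (1 - cosh t / cosh s) / s ^ 2 ≤ 2 / (1 + s ^ 2) := by
  have hcosh := cosh_pos s
  have h1 : 1 - cosh t / cosh s ≤ (cosh s - 1) / cosh s := by
    rw [sub_div, div_self hcosh.ne']
    gcongr
    exact one_le_cosh t
  calc (1 - cosh t / cosh s) / s ^ 2 ≤ (cosh s - 1) / cosh s / s ^ 2 := by gcongr
    _ ≤ 2 / (1 + s ^ 2) := by
      rw [div_div, div_le_div_iff₀ (by positivity) (by positivity)]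
      nlinarith [cosh_sub_one_le_sq_mul_cosh s]

/-- Resolvent estimate `‖(μ + C)⁻¹‖ ≤ c/(1+μ)` for the operator `C = -d²/dy²`
with boundary conditions `u(0)=0`, `u'(1)=0` on `C([0,1])`. -/
theorem resolvent_estimate_mixed_bvp :
    ∃ c > 0, ∀ μ : ℝ, 0 ≤ μ → ∀ f : ℝ → ℝ, Continuous f →
      ∃ u u' : ℝ → ℝ,
        (∀ y ∈ Set.Icc (0:ℝ) 1, HasDerivAt u (u' y) y) ∧
        (∀ y ∈ Set.Icc (0:ℝ) 1, HasDerivAt u' (μ * u y - f y) y) ∧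
        u 0 = 0 ∧ u' 1 = 0 ∧
        ∀ M : ℝ, (∀ τ ∈ Set.Icc (0:ℝ) 1, |f τ| ≤ M) →
          ∀ y ∈ Set.Icc (0:ℝ) 1, |u y| ≤ c / (1 + μ) * M := by
  refine ⟨2, two_pos, fun μ hμ f hf => ?_⟩
  rcases hμ.eq_or_lt with rfl | hμ
  · refine isGreenPair_id_one.exists_solution_abs_le one_pos (fun t ht => ht.1)
      (fun _ _ => zero_le_one) (fun y hy => ?_) hf
    rw [greenSolution_id_one]
    nlinarith [hy.1, hy.2]
  · obtain ⟨s, hs, rfl⟩ : ∃ s, 0 < s ∧ s ^ 2 = μ := ⟨√μ, sqrt_pos.2 hμ, sq_sqrt hμ.le⟩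
    refine (isGreenPair_sinh_cosh s).exists_solution_abs_le (by positivity)
      (fun t ht => sinh_nonneg_iff.2 (mul_nonneg hs.le ht.1)) (fun _ _ => (cosh_pos _).le)
      (fun y _ => ?_) hf
    rw [(isGreenPair_sinh_cosh s).greenSolution_one (by positivity) (by positivity),
      mul_zero, cosh_zero, mul_one, mul_div_mul_left _ _ hs.ne']
    exact one_sub_cosh_div_cosh_div_sq_le hs.ne' _
end
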